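/- Let A be a ring and M, N complexes of A-modules with M a perfect complex. Then there is an isomorphism D(RHom_A(N, D(A) ⊗^L_A M)) ≅ RHom_A(M, N), natural in M and N, where D = RHom_k(−, k) is k-linear duality. Equivalently (a formulation avoiding derived Hom-duality): for a finite-dimensional algebra A over a field k and finite-dimensional A-modules, there is a natural isomorphism D(Hom_A(N, D(A) ⊗_A M)) ≅ Hom_A(M, N) when M is finitely generated projective. -/

import Mathlib

open MulOpposite

section Nakayama

variable (k A : Type*) [Field k] [Ring A] [Algebra k A]

variable (M : Type*) [AddCommGroup M] [Module A M] [Module k M] [IsScalarTower k A M]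

/-- The Nakayama functor applied to `M`: `ν(M) := D(Hom_A(M, A))`, the `k`-linear dual of
`Hom_A(M, A)`; for `M` finitely generated projective this is `D(A) ⊗_A M`. -/
abbrev Nakayama : Type _ := Module.Dual k (M →ₗ[A] A)

noncomputable instance : SMul A (Nakayama k A M) :=
  ⟨fun a φ => φ.comp (DistribMulAction.toLinearMap k (M →ₗ[A] A) (op a))⟩

lemma nakayama_smul_def (a : A) (φ : Nakayama k A M) (ψ : M →ₗ[A] A) :
    (a • φ) ψ = φ (op a • ψ) := rfl

/-- The left `A`-module structure on `ν(M) = D(Hom_A(M, A))` dual to the right `A`-module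
structure of `Hom_A(M, A)`. -/
noncomputable instance : Module A (Nakayama k A M) where
  one_smul φ := by
    apply LinearMap.ext; intro ψ
    rw [nakayama_smul_def]; rw [op_one, one_smul]
  mul_smul a b φ := by
    apply LinearMap.ext; intro ψ
    rw [nakayama_smul_def, nakayama_smul_def, nakayama_smul_def, op_mul, mul_smul]
  smul_zero a := rfl
  smul_add a φ φ' := rfl
  add_smul a b φ := by
    apply LinearMap.ext; intro ψ
    rw [nakayama_smul_def]
    rw [op_add, add_smul, map_add]
    rfl
  zero_smul φ := by
    apply LinearMap.ext; intro ψ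
    rw [nakayama_smul_def, op_zero, zero_smul, map_zero]
    rfl

instance : SMulCommClass A k (Nakayama k A M) :=
  ⟨fun a c φ => by
    apply LinearMap.ext; intro ψ
    rfl⟩

variable {M} in
/-- Functoriality of the Nakayama functor: a map `h : M' → M` of `A`-modules induces an
`A`-linear map `ν(h) : ν(M') → ν(M)`. -/
noncomputable def nakayamaMap {M' : Type*} [AddCommGroup M'] [Module A M'] [Module k M']
    [IsScalarTower k A M'] (h : M' →ₗ[A] M) :
    Nakayama k A M' →ₗ[A] Nakayama k A M where
  toFun φ :=
    φ.comp
      (show (M →ₗ[A] A) →ₗ[k] (M' →ₗ[A] A) from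
        { toFun := fun ψ : M →ₗ[A] A => ψ.comp h
          map_add' := fun _ _ => LinearMap.add_comp _ _ _
          map_smul' := fun c ψ => LinearMap.ext fun m => rfl })
  map_add' φ φ' := LinearMap.ext fun ψ => rfl
  map_smul' a φ := by
    apply LinearMap.ext; intro ψ
    rfl

end Nakayama

/-! For `l ∈ D N` and `x ∈ M`, the map `n ↦ (χ ↦ l (χ x • n))` is an `A`-linear map `N → ν M`
(`Nakayama.coeval`). Evaluating `ξ ∈ D Hom_A(N, ν M)` on these maps and using `N ≅ D D N` turns `ξ`
into an `A`-linear map `M → N`; this construction involves no choices, so it is visibly natural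
in `M` and `N`. When `M` is finitely generated projective, a dual basis `x = ∑ φᵢ(x) • mᵢ` gives
the inverse `f ↦ (ψ ↦ ∑ ψ (f mᵢ) φᵢ)`: the key point is that every `ψ : N → ν M` is the sum of
the coevaluations at `mᵢ` of the functionals `n ↦ ψ n φᵢ`. -/

open Module

theorem Module.Projective.exists_dual_basis (A M : Type*) [Semiring A] [AddCommMonoid M]
    [Module A M] [Module.Finite A M] [Module.Projective A M] :
    ∃ (n : ℕ) (m : Fin n → M) (φ : Fin n → M →ₗ[A] A), ∀ x, ∑ i, φ i x • m i = x := by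
  classical
  obtain ⟨n, p, s, -, -, hps⟩ := Module.Finite.exists_comp_eq_id_of_projective A M
  refine ⟨n, fun i => p fun j => if i = j then 1 else 0, fun i => LinearMap.proj i ∘ₗ s,
    fun x => ?_⟩
  simpa [← LinearMap.pi_apply_eq_sum_univ] using LinearMap.congr_fun hps x

theorem sum_op_smul_eq_of_dual_basis {A M ι : Type*} [Semiring A] [AddCommMonoid M]
    [Module A M] [Fintype ι] {m : ι → M} {φ : ι → M →ₗ[A] A} (hmφ : ∀ x, ∑ i, φ i x • m i = x)
    (χ : M →ₗ[A] A) : ∑ i, op (χ (m i)) • φ i = χ := by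
  ext x
  conv_rhs => rw [← hmφ x]
  simp [LinearMap.sum_apply, map_sum]

section SerreDuality

variable {k A : Type*} [Field k] [Ring A] [Algebra k A]
variable {M : Type*} [AddCommGroup M] [Module A M] [Module k M] [IsScalarTower k A M]
variable {N : Type*} [AddCommGroup N] [Module A N]

instance : IsScalarTower k A (Nakayama k A M) :=
  ⟨fun c a φ => LinearMap.ext fun χ => by
    rw [nakayama_smul_def, LinearMap.smul_apply, nakayama_smul_def, ← map_smul]
    congr 1
    ext x
    simp⟩

namespace Nakayama

section DualOfHom

variable {ι : Type*} [Fintype ι]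

variable (k A) in
noncomputable def dualOfHom (m : ι → M) (φ : ι → M →ₗ[A] A) (f : M →ₗ[A] N) :
    Dual k (N →ₗ[A] Nakayama k A M) :=
  ∑ i, Dual.eval k (M →ₗ[A] A) (φ i) ∘ₗ LinearMap.applyₗ' k (f (m i))

theorem dualOfHom_apply (m : ι → M) (φ : ι → M →ₗ[A] A) (f : M →ₗ[A] N)
    (ψ : N →ₗ[A] Nakayama k A M) : dualOfHom k A m φ f ψ = ∑ i, ψ (f (m i)) (φ i) := by
  simp [dualOfHom, LinearMap.sum_apply]

end DualOfHom

variable [Module k N] [IsScalarTower k A N]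

variable (k A) in
noncomputable def coeval (x : M) : Dual k N →ₗ[k] N →ₗ[A] Nakayama k A M where
  toFun l :=
    { toFun n :=
        { toFun χ := l (χ x • n)
          map_add' χ χ' := by simp [add_smul]
          map_smul' c χ := by simp [smul_assoc] }
      map_add' n n' := by ext; simp
      map_smul' a n := by ext; simp [nakayama_smul_def, mul_smul] }
  map_add' l l' := rfl
  map_smul' c l := rfl

@[simp]
theorem coeval_apply (x : M) (l : Dual k N) (n : N) (χ : M →ₗ[A] A) :
    coeval k A x l n χ = l (χ x • n) :=
  rfl

theorem coeval_add (x y : M) :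
    (coeval k A (x + y) : Dual k N →ₗ[k] _) = coeval k A x + coeval k A y := by
  ext; simp [add_smul]

theorem eq_sum_coeval {ι : Type*} [Fintype ι] {m : ι → M} {φ : ι → M →ₗ[A] A}
    (hmφ : ∀ x, ∑ i, φ i x • m i = x) (ψ : N →ₗ[A] Nakayama k A M) :
    ψ = ∑ i, coeval k A (m i) (Dual.eval k _ (φ i) ∘ₗ ψ.restrictScalars k) := by
  ext n χ
  conv_lhs => rw [← sum_op_smul_eq_of_dual_basis hmφ χ]
  simp [LinearMap.sum_apply, nakayama_smul_def]

theorem coeval_comp {N' : Type*} [AddCommGroup N'] [Module A N'] [Module k N']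
    [IsScalarTower k A N'] (x : M) (l : Dual k N') (g : N →ₗ[A] N') :
    coeval k A x l ∘ₗ g = coeval k A x (l ∘ₗ g.restrictScalars k) := by
  ext; simp

theorem nakayamaMap_comp_coeval {M' : Type*}
    [AddCommGroup M'] [Module A M'] [Module k M'] [IsScalarTower k A M'] (h : M' →ₗ[A] M)
    (x : M') (l : Dual k N) : nakayamaMap k A h ∘ₗ coeval k A x l = coeval k A (h x) l :=
  rfl

variable [SMulCommClass A k N]

theorem coeval_smul (a : A) (x : M) (l : Dual k N) :
    coeval k A (a • x) l = coeval k A x (l ∘ₗ DistribSMul.toLinearMap k N a) := by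
  ext; simp [mul_smul]

variable [IsReflexive k N]

variable (k A M N) in
noncomputable def homOfDual : Dual k (N →ₗ[A] Nakayama k A M) →ₗ[k] M →ₗ[A] N where
  toFun ξ :=
    { toFun x := (evalEquiv k N).symm (ξ ∘ₗ coeval k A x)
      map_add' x y := by rw [coeval_add, LinearMap.comp_add, map_add]
      map_smul' a x := eval_apply_injective k <| LinearMap.ext fun l => by
        simp only [Dual.eval_apply, apply_evalEquiv_symm_apply, LinearMap.comp_apply,
          coeval_smul]
        exact (apply_evalEquiv_symm_apply k N (l ∘ₗ DistribSMul.toLinearMap k N a)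
          (ξ ∘ₗ coeval k A x)).symm }
  map_add' ξ ξ' := by ext; simp [LinearMap.add_comp]
  map_smul' c ξ := by ext; simp [LinearMap.smul_comp]

theorem apply_homOfDual (ξ : Dual k (N →ₗ[A] Nakayama k A M)) (x : M) (l : Dual k N) :
    l (homOfDual k A M N ξ x) = ξ (coeval k A x l) :=
  apply_evalEquiv_symm_apply k N l _

section DualBasis

variable {ι : Type*} [Fintype ι] {m : ι → M} {φ : ι → M →ₗ[A] A}

theorem homOfDual_dualOfHom (hmφ : ∀ x, ∑ i, φ i x • m i = x) (f : M →ₗ[A] N) :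
    homOfDual k A M N (dualOfHom k A m φ f) = f := by
  ext x
  refine eval_apply_injective k (LinearMap.ext fun l => ?_)
  conv_rhs => rw [Dual.eval_apply, ← hmφ x]
  simp [apply_homOfDual, dualOfHom_apply]

theorem dualOfHom_homOfDual (hmφ : ∀ x, ∑ i, φ i x • m i = x)
    (ξ : Dual k (N →ₗ[A] Nakayama k A M)) : dualOfHom k A m φ (homOfDual k A M N ξ) = ξ := by
  ext ψ
  conv_rhs => rw [eq_sum_coeval hmφ ψ]
  simp [dualOfHom_apply, ← apply_homOfDual]

end DualBasis

theorem homOfDual_bijective [Module.Finite A M] [Module.Projective A M] :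
    Function.Bijective (homOfDual k A M N) := by
  obtain ⟨n, m, φ, hmφ⟩ := Module.Projective.exists_dual_basis A M
  exact ⟨Function.LeftInverse.injective (dualOfHom_homOfDual hmφ),
    Function.RightInverse.surjective (homOfDual_dualOfHom hmφ)⟩

theorem comp_homOfDual {N' : Type*} [AddCommGroup N'] [Module A N'] [Module k N']
    [IsScalarTower k A N'] [SMulCommClass A k N'] [IsReflexive k N'] (g : N →ₗ[A] N')
    (ξ : Dual k (N →ₗ[A] Nakayama k A M)) :
    g ∘ₗ homOfDual k A M N ξ = homOfDual k A M N' (ξ ∘ₗ LinearMap.lcomp k _ g) := by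
  ext x
  refine eval_apply_injective k (LinearMap.ext fun l => ?_)
  simp only [Dual.eval_apply, LinearMap.comp_apply]
  rw [apply_homOfDual]
  change (l ∘ₗ g.restrictScalars k) (homOfDual k A M N ξ x) = ξ (coeval k A x l ∘ₗ g)
  rw [apply_homOfDual, coeval_comp]

theorem homOfDual_comp {M' : Type*} [AddCommGroup M'] [Module A M']
    [Module k M'] [IsScalarTower k A M'] (h : M' →ₗ[A] M)
    (ξ : Dual k (N →ₗ[A] Nakayama k A M)) :
    homOfDual k A M N ξ ∘ₗ h =
      homOfDual k A M' N (ξ ∘ₗ LinearMap.compRight k (nakayamaMap k A h)) := by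
  ext x
  refine eval_apply_injective k (LinearMap.ext fun l => ?_)
  simp only [Dual.eval_apply, LinearMap.comp_apply, apply_homOfDual, LinearMap.compRight_apply,
    nakayamaMap_comp_coeval]

end Nakayama

open Nakayama

variable [Module k N] [IsScalarTower k A N] [SMulCommClass A k N] [IsReflexive k N]

variable (k A M N) in
noncomputable def serreDuality [Module.Finite A M] [Module.Projective A M] :
    (M →ₗ[A] N) ≃ₗ[k] Dual k (N →ₗ[A] Nakayama k A M) :=
  (LinearEquiv.ofBijective _ homOfDual_bijective).symm

theorem serreDuality_natural_right [Module.Finite A M] [Module.Projective A M] {N' : Type*}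
    [AddCommGroup N'] [Module A N'] [Module k N'] [IsScalarTower k A N'] [SMulCommClass A k N']
    [IsReflexive k N'] (g : N →ₗ[A] N') (f : M →ₗ[A] N) (ψ : N' →ₗ[A] Nakayama k A M) :
    serreDuality k A M N' (g ∘ₗ f) ψ = serreDuality k A M N f (ψ ∘ₗ g) := by
  obtain ⟨ξ, rfl⟩ := (serreDuality k A M N).symm.surjective f
  have hξ : g ∘ₗ (serreDuality k A M N).symm ξ =
      (serreDuality k A M N').symm (ξ ∘ₗ LinearMap.lcomp k _ g) :=
    comp_homOfDual g ξ
  rw [hξ, LinearEquiv.apply_symm_apply, LinearEquiv.apply_symm_apply]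
  rfl

theorem serreDuality_natural_left [Module.Finite A M] [Module.Projective A M]
    {M' : Type*} [AddCommGroup M'] [Module A M'] [Module k M']
    [IsScalarTower k A M'] [Module.Finite A M'] [Module.Projective A M'] (h : M' →ₗ[A] M)
    (f : M →ₗ[A] N) (ψ : N →ₗ[A] Nakayama k A M') :
    serreDuality k A M' N (f ∘ₗ h) ψ = serreDuality k A M N f (nakayamaMap k A h ∘ₗ ψ) := by
  obtain ⟨ξ, rfl⟩ := (serreDuality k A M N).symm.surjective f
  have hξ : (serreDuality k A M N).symm ξ ∘ₗ h =
      (serreDuality k A M' N).symm (ξ ∘ₗ LinearMap.compRight k (nakayamaMap k A h)) :=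
    homOfDual_comp h ξ
  rw [hξ, LinearEquiv.apply_symm_apply, LinearEquiv.apply_symm_apply]
  rfl

end SerreDuality

theorem serre_duality_for_modules_general
    (k A : Type*) [Field k] [Ring A] [Algebra k A] :
    ∃ E : ∀ (M : Type) (_ : AddCommGroup M) (_ : Module A M) (_ : Module k M)
        (_ : IsScalarTower k A M) (_ : SMulCommClass A k M)
        (_ : Module.Finite A M) (_ : Module.Projective A M) (_ : FiniteDimensional k M)
        (N : Type) (_ : AddCommGroup N) (_ : Module A N) (_ : Module k N)
        (_ : IsScalarTower k A N) (_ : SMulCommClass A k N) (_ : FiniteDimensional k N),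
        (M →ₗ[A] N) ≃ₗ[k] Module.Dual k (N →ₗ[A] Nakayama k A M),
      -- naturality in N
      (∀ (M : Type) (iM1 : AddCommGroup M) (iM2 : Module A M) (iM3 : Module k M)
          (iM4 : IsScalarTower k A M) (iM5 : SMulCommClass A k M)
          (iM6 : Module.Finite A M) (iM7 : Module.Projective A M) (iM8 : FiniteDimensional k M)
          (N : Type) (iN1 : AddCommGroup N) (iN2 : Module A N) (iN3 : Module k N)
          (iN4 : IsScalarTower k A N) (iN5 : SMulCommClass A k N) (iN6 : FiniteDimensional k N)
          (N' : Type) (iN'1 : AddCommGroup N') (iN'2 : Module A N') (iN'3 : Module k N')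
          (iN'4 : IsScalarTower k A N') (iN'5 : SMulCommClass A k N')
          (iN'6 : FiniteDimensional k N')
          (g : N →ₗ[A] N') (f : M →ₗ[A] N) (ψ : N' →ₗ[A] Nakayama k A M),
          E M iM1 iM2 iM3 iM4 iM5 iM6 iM7 iM8 N' iN'1 iN'2 iN'3 iN'4 iN'5 iN'6 (g.comp f) ψ
            = E M iM1 iM2 iM3 iM4 iM5 iM6 iM7 iM8 N iN1 iN2 iN3 iN4 iN5 iN6 f (ψ.comp g)) ∧
      -- naturality in M
      (∀ (M : Type) (iM1 : AddCommGroup M) (iM2 : Module A M) (iM3 : Module k M)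
          (iM4 : IsScalarTower k A M) (iM5 : SMulCommClass A k M)
          (iM6 : Module.Finite A M) (iM7 : Module.Projective A M) (iM8 : FiniteDimensional k M)
          (M' : Type) (iM'1 : AddCommGroup M') (iM'2 : Module A M') (iM'3 : Module k M')
          (iM'4 : IsScalarTower k A M') (iM'5 : SMulCommClass A k M')
          (iM'6 : Module.Finite A M') (iM'7 : Module.Projective A M')
          (iM'8 : FiniteDimensional k M')
          (N : Type) (iN1 : AddCommGroup N) (iN2 : Module A N) (iN3 : Module k N)
          (iN4 : IsScalarTower k A N) (iN5 : SMulCommClass A k N) (iN6 : FiniteDimensional k N)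
          (h : M' →ₗ[A] M) (f : M →ₗ[A] N) (ψ : N →ₗ[A] Nakayama k A M'),
          E M' iM'1 iM'2 iM'3 iM'4 iM'5 iM'6 iM'7 iM'8 N iN1 iN2 iN3 iN4 iN5 iN6 (f.comp h) ψ
            = E M iM1 iM2 iM3 iM4 iM5 iM6 iM7 iM8 N iN1 iN2 iN3 iN4 iN5 iN6 f
                ((nakayamaMap k A h).comp ψ)) := by
  refine ⟨fun M _ _ _ _ _ _ _ _ N _ _ _ _ _ _ => serreDuality k A M N, ?_, ?_⟩
  · intros
    exact serreDuality_natural_right _ _ _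
  · intros
    exact serreDuality_natural_left _ _ _

/-- Serre duality at the module level (Auslander–Reiten duality for projectives): over a
finite-dimensional `k`-algebra `A` there is, for every finitely generated projective
finite-dimensional `M` and every finite-dimensional `N`, a `k`-linear isomorphism
`Hom_A(M, N) ≅ D(Hom_A(N, ν M))`, where `ν M = D(Hom_A(M, A))` (which is `D(A) ⊗_A M` for such
`M`), and this family of isomorphisms is natural in `N` and in `M`. -/
theorem serre_duality_for_modules
    (k A : Type*) [Field k] [Ring A] [Algebra k A] [FiniteDimensional k A] :
    ∃ E : ∀ (M : Type) (_ : AddCommGroup M) (_ : Module A M) (_ : Module k M)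
        (_ : IsScalarTower k A M) (_ : SMulCommClass A k M)
        (_ : Module.Finite A M) (_ : Module.Projective A M) (_ : FiniteDimensional k M)
        (N : Type) (_ : AddCommGroup N) (_ : Module A N) (_ : Module k N)
        (_ : IsScalarTower k A N) (_ : SMulCommClass A k N) (_ : FiniteDimensional k N),
        (M →ₗ[A] N) ≃ₗ[k] Module.Dual k (N →ₗ[A] Nakayama k A M),
      -- naturality in N
      (∀ (M : Type) (iM1 : AddCommGroup M) (iM2 : Module A M) (iM3 : Module k M)
          (iM4 : IsScalarTower k A M) (iM5 : SMulCommClass A k M)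
          (iM6 : Module.Finite A M) (iM7 : Module.Projective A M) (iM8 : FiniteDimensional k M)
          (N : Type) (iN1 : AddCommGroup N) (iN2 : Module A N) (iN3 : Module k N)
          (iN4 : IsScalarTower k A N) (iN5 : SMulCommClass A k N) (iN6 : FiniteDimensional k N)
          (N' : Type) (iN'1 : AddCommGroup N') (iN'2 : Module A N') (iN'3 : Module k N')
          (iN'4 : IsScalarTower k A N') (iN'5 : SMulCommClass A k N')
          (iN'6 : FiniteDimensional k N')
          (g : N →ₗ[A] N') (f : M →ₗ[A] N) (ψ : N' →ₗ[A] Nakayama k A M),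
          E M iM1 iM2 iM3 iM4 iM5 iM6 iM7 iM8 N' iN'1 iN'2 iN'3 iN'4 iN'5 iN'6 (g.comp f) ψ
            = E M iM1 iM2 iM3 iM4 iM5 iM6 iM7 iM8 N iN1 iN2 iN3 iN4 iN5 iN6 f (ψ.comp g)) ∧
      -- naturality in M
      (∀ (M : Type) (iM1 : AddCommGroup M) (iM2 : Module A M) (iM3 : Module k M)
          (iM4 : IsScalarTower k A M) (iM5 : SMulCommClass A k M)
          (iM6 : Module.Finite A M) (iM7 : Module.Projective A M) (iM8 : FiniteDimensional k M)
          (M' : Type) (iM'1 : AddCommGroup M') (iM'2 : Module A M') (iM'3 : Module k M')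
          (iM'4 : IsScalarTower k A M') (iM'5 : SMulCommClass A k M')
          (iM'6 : Module.Finite A M') (iM'7 : Module.Projective A M')
          (iM'8 : FiniteDimensional k M')
          (N : Type) (iN1 : AddCommGroup N) (iN2 : Module A N) (iN3 : Module k N)
          (iN4 : IsScalarTower k A N) (iN5 : SMulCommClass A k N) (iN6 : FiniteDimensional k N)
          (h : M' →ₗ[A] M) (f : M →ₗ[A] N) (ψ : N →ₗ[A] Nakayama k A M'),
          E M' iM'1 iM'2 iM'3 iM'4 iM'5 iM'6 iM'7 iM'8 N iN1 iN2 iN3 iN4 iN5 iN6 (f.comp h) ψ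
            = E M iM1 iM2 iM3 iM4 iM5 iM6 iM7 iM8 N iN1 iN2 iN3 iN4 iN5 iN6 f
                ((nakayamaMap k A h).comp ψ)) :=
  serre_duality_for_modules_general k A
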